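/- arXiv:1809.09286 — 3 statements merged into one kernel-verified Lean document; each statement's English description precedes it below -/
import Mathlib

section
/- Let p, m, n be natural numbers, and let f : ℤ^p → ℤ^m and g : ℤ^p → ℤ^n be group homomorphisms (equivalently ℤ-linear maps) such that the image of f is a direct summand of ℤ^m, the image of g is a direct summand of ℤ^n, and ker(f) ⊆ ker(g). Then the homomorphism h : ℤ^p → ℤ^m ⊕ ℤ^n defined by h(x) = (f(x), g(x)) has image which is a direct summand of ℤ^m ⊕ ℤ^n. -/
/-!
Since `range f` has a complement `P` and `ker f ≤ ker g`, the map `f x ↦ g x` is well defined on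
`range f` and extends by zero on `P` to some `U` with `U ∘ f = g`. Then `range (f, g)` is the graph
of `U` over `range f`, and `P × ℤ^n` is a complement of it: write `(y, z)` with `y = f x + w`,
`w ∈ P`, as `(f x, U (f x)) + (w, z - U (f x))`.
-/

namespace LinearMap

variable {R M N N' : Type*} [Ring R] [AddCommGroup M] [AddCommGroup N] [AddCommGroup N']
  [Module R M] [Module R N] [Module R N']

theorem exists_comp_eq_of_ker_le_of_isCompl_range {f : M →ₗ[R] N} {g : M →ₗ[R] N'}
    {P : Submodule R N} (hP : IsCompl (range f) P) (hker : ker f ≤ ker g) :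
    ∃ U : N →ₗ[R] N', U ∘ₗ f = g := by
  refine ⟨(ker f).liftQ g hker ∘ₗ f.quotKerEquivRange.symm.toLinearMap ∘ₗ
    (range f).projectionOnto P hP, LinearMap.ext fun x => ?_⟩
  simp [Submodule.projectionOnto_apply_of_mem_left hP (mem_range_self f x)]

theorem isCompl_range_prod_comp {f : M →ₗ[R] N} {P : Submodule R N} (hP : IsCompl (range f) P)
    (U : N →ₗ[R] N') : IsCompl (range (f.prod (U ∘ₗ f))) (P.prod ⊤) := by
  constructor
  · rw [Submodule.disjoint_def]
    rintro _ ⟨x, rfl⟩ hxP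
    have hfx : f x = 0 :=
      (Submodule.disjoint_def.mp hP.disjoint) _ (mem_range_self f x) (Submodule.mem_prod.mp hxP).1
    simp [hfx]
  · rw [codisjoint_iff, eq_top_iff]
    rintro ⟨y, z⟩ -
    obtain ⟨_, ⟨x, rfl⟩, w, hw, rfl⟩ :=
      Submodule.mem_sup.mp (hP.sup_eq_top ▸ Submodule.mem_top : y ∈ range f ⊔ P)
    have hsplit : (f x + w, z) = (f.prod (U ∘ₗ f)) x + (w, z - U (f x)) := by simp
    rw [hsplit]
    exact Submodule.add_mem_sup (mem_range_self _ x) (Submodule.mem_prod.mpr ⟨hw, trivial⟩)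

end LinearMap

theorem image_prod_isDirectSummand_general
    (p m n : ℕ)
    (f : (Fin p → ℤ) →ₗ[ℤ] (Fin m → ℤ))
    (g : (Fin p → ℤ) →ₗ[ℤ] (Fin n → ℤ))
    (hf : ∃ P : Submodule ℤ (Fin m → ℤ), IsCompl (LinearMap.range f) P)
    (hker : LinearMap.ker f ≤ LinearMap.ker g) :
    ∃ Q : Submodule ℤ ((Fin m → ℤ) × (Fin n → ℤ)),
      IsCompl (LinearMap.range (f.prod g)) Q := by
  obtain ⟨P, hP⟩ := hf
  obtain ⟨U, rfl⟩ := LinearMap.exists_comp_eq_of_ker_le_of_isCompl_range hP hker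
  exact ⟨P.prod ⊤, LinearMap.isCompl_range_prod_comp hP U⟩

/-- If `f : ℤ^p → ℤ^m` and `g : ℤ^p → ℤ^n` are ℤ-linear maps whose
images are direct summands and `ker f ⊆ ker g`, then `h = (f, g) : ℤ^p → ℤ^m ⊕ ℤ^n`
has image a direct summand of `ℤ^m ⊕ ℤ^n`. -/
theorem image_prod_isDirectSummand
    (p m n : ℕ)
    (f : (Fin p → ℤ) →ₗ[ℤ] (Fin m → ℤ))
    (g : (Fin p → ℤ) →ₗ[ℤ] (Fin n → ℤ))
    (hf : ∃ P : Submodule ℤ (Fin m → ℤ), IsCompl (LinearMap.range f) P)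
    (hg : ∃ P : Submodule ℤ (Fin n → ℤ), IsCompl (LinearMap.range g) P)
    (hker : LinearMap.ker f ≤ LinearMap.ker g) :
    ∃ Q : Submodule ℤ ((Fin m → ℤ) × (Fin n → ℤ)),
      IsCompl (LinearMap.range (f.prod g)) Q :=
  image_prod_isDirectSummand_general p m n f g hf hker
end

section
/- The ℤ-linear map T : ℤ⁶ → ℂ⁶ sending the j-th standard basis vector eⱼ to ξⱼ′ (for j = 1,…,6) has kernel exactly the cyclic subgroup ℤ·(e₃ − e₄). -/
/- With the paper's indexing, coordinates 4, 5 and 6 of `∑ nⱼ ξⱼ′` give `2n₂ + n₆ = 0`,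
`2n₅ = n₆` and `n₃ + n₄ = 0`, while coordinate 1 reads `2n₁ + n₂ + n₃ + n₄ + n₅ + n₆ θ = 0`.
Irrationality of `θ` forces `n₆ = 0`, hence `n₁ = n₂ = n₅ = 0` and `n₄ = -n₃`; conversely
`ξ₃′ = ξ₄′` puts `e₃ - e₄` in the kernel. -/

open Complex

/-- The images `ξ₁′, …, ξ₆′` of the generators of `K₀(A_θ ⋊ ℤ₂)` under `𝐓₄ ∘ ι⋆`. -/
noncomputable def ξ' (θ : ℝ) : Fin 6 → Fin 6 → ℂ :=
  ![![1, 0, 0, 0, 0, 0],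
    ![1/2, 0, 0, 1/2, 0, 0],
    ![1/2, 0, 0, 0, 0, 1/2],
    ![1/2, 0, 0, 0, 0, 1/2],
    ![1/2, 0, 0, 0, 1/2, 0],
    ![(θ : ℂ)/2, 0, 0, 1/4, -(1/4), 0]]

theorem LinearMap.pi_apply_eq_sum_univ_single {ι R M : Type*} [Fintype ι] [DecidableEq ι]
    [Semiring R] [AddCommMonoid M] [Module R M] (f : (ι → R) →ₗ[R] M) (x : ι → R) :
    f x = ∑ i, x i • f (Pi.single i 1) := by
  conv_lhs => rw [← Finset.univ_sum_single x]
  simp only [map_sum, ← map_smul, ← Pi.single_smul', smul_eq_mul, mul_one]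

theorem Irrational.eq_zero_of_intCast_add_intCast_mul_eq_zero {θ : ℝ} (hθ : Irrational θ)
    {a m : ℤ} (h : (a : ℝ) + m * θ = 0) : m = 0 := by
  by_contra hm
  exact ((hθ.intCast_mul hm).intCast_add a).ne_zero h

theorem sum_zsmul_ξ' (θ : ℝ) (n : Fin 6 → ℤ) :
    ∑ i, n i • ξ' θ i = ![((2 * n 0 + n 1 + n 2 + n 3 + n 4 + n 5 * θ) / 2 : ℂ), 0, 0,
      (2 * n 1 + n 5) / 4, (2 * n 4 - n 5) / 4, (n 2 + n 3) / 2] := by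
  ext k
  fin_cases k <;> simp [ξ', Fin.sum_univ_six] <;> ring

theorem eq_zsmul_of_sum_zsmul_ξ'_eq_zero {θ : ℝ} (hθ : Irrational θ) {n : Fin 6 → ℤ}
    (h : ∑ i, n i • ξ' θ i = 0) : n = n 2 • (Pi.single 2 1 - Pi.single 3 1) := by
  rw [sum_zsmul_ξ'] at h
  have h0 := congrFun h 0
  have h3 := congrFun h 3
  have h4 := congrFun h 4
  have h5 := congrFun h 5
  simp only [Matrix.cons_val, Pi.zero_apply, div_eq_zero_iff, OfNat.ofNat_ne_zero, or_false]
    at h0 h3 h4 h5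
  have hn5 : n 5 = 0 := hθ.eq_zero_of_intCast_add_intCast_mul_eq_zero
    (a := 2 * n 0 + n 1 + n 2 + n 3 + n 4) (by exact_mod_cast h0)
  have hn0 : 2 * n 0 + n 1 + n 2 + n 3 + n 4 = 0 := by
    rw [hn5, Int.cast_zero, zero_mul, add_zero] at h0
    exact_mod_cast h0
  have hn1 : 2 * n 1 + n 5 = 0 := by exact_mod_cast h3
  have hn4 : 2 * n 4 - n 5 = 0 := by exact_mod_cast h4
  have hn3 : n 2 + n 3 = 0 := by exact_mod_cast h5
  ext k
  fin_cases k <;> simp <;> omega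

/-- The ℤ-linear map `T : ℤ⁶ → ℂ⁶` sending the `j`-th standard basis
vector to `ξⱼ′` has kernel exactly `ℤ·(e₃ - e₄)`. -/
theorem ker_T_eq_span (θ : ℝ) (hθ : Irrational θ)
    (T : (Fin 6 → ℤ) →ₗ[ℤ] (Fin 6 → ℂ))
    (hT : ∀ j : Fin 6, T (Pi.single j 1) = ξ' θ j) :
    LinearMap.ker T
      = Submodule.span ℤ {(Pi.single 2 1 - Pi.single 3 1 : Fin 6 → ℤ)} := by
  apply le_antisymm
  · intro n hn
    rw [LinearMap.mem_ker, T.pi_apply_eq_sum_univ_single] at hn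
    simp only [hT] at hn
    exact Submodule.mem_span_singleton.mpr ⟨n 2, (eq_zsmul_of_sum_zsmul_ξ'_eq_zero hθ hn).symm⟩
  · rw [Submodule.span_singleton_le_iff_mem, LinearMap.mem_ker, map_sub, hT, hT]
    exact sub_eq_zero.mpr rfl
end

section
/- The six vectors ξ₁, ξ₂, ξ₃, ξ₄, ξ₅, ξ₆ are ℤ-linearly independent in ℝ⁵ (so the ℤ-submodule of ℝ⁵ they generate is free of rank 6). -/
/-!
The first five vectors form a lower triangular matrix with nonzero diagonal, so they are
independent over `ℝ`, hence over `ℤ`. Every vector in their `ℚ`-span has rational first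
coordinate, whereas `ξ₆` has first coordinate `θ / 2 ∉ ℚ`; so `ξ₆` is outside that span, which
is enough to adjoin it to a `ℤ`-independent family.
-/

theorem Irrational.notMem_span_rat {M : Type*} [AddCommGroup M] [Module ℚ M] (φ : M →ₗ[ℚ] ℝ)
    {s : Set M} (hs : ∀ x ∈ s, φ x ∈ Set.range ((↑) : ℚ → ℝ)) {w : M} (hw : Irrational (φ w)) :
    w ∉ Submodule.span ℚ s := by
  intro hw_mem
  have hspan : Submodule.span ℚ s ≤ (LinearMap.range (Algebra.linearMap ℚ ℝ)).comap φ :=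
    Submodule.span_le.mpr fun x hx => by simpa using hs x hx
  obtain ⟨q, hq⟩ := hspan hw_mem
  exact hw ⟨q, by simpa using hq⟩

theorem xi_init_linearIndependent :
    LinearIndependent ℤ
      (![![1, 0, 0, 0, 0],
         ![1/2, 2, 0, 0, 0],
         ![1/2, 0, 2, 0, 0],
         ![1/2, 0, 0, 2, 0],
         ![1/2, 0, 0, 0, 2]] : Fin 5 → Fin 5 → ℝ) := by
  have hdet : Matrix.det (!![1, 0, 0, 0, 0; 1/2, 2, 0, 0, 0; 1/2, 0, 2, 0, 0; 1/2, 0, 0, 2, 0;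
      1/2, 0, 0, 0, 2] : Matrix (Fin 5) (Fin 5) ℝ) ≠ 0 := by
    simp [Matrix.det_succ_row_zero, Fin.sum_univ_succ]
  exact (Matrix.linearIndependent_rows_of_det_ne_zero hdet).restrict_scalars' ℤ

theorem xi_linearIndependent_general (θ : ℝ) (hθ : Irrational θ) (c : ℝ) :
    LinearIndependent ℤ
      (![![1, 0, 0, 0, 0],
         ![1/2, 2, 0, 0, 0],
         ![1/2, 0, 2, 0, 0],
         ![1/2, 0, 0, 2, 0],
         ![1/2, 0, 0, 0, 2],
         ![θ/2, 1, c, -c, -1]] : Fin 6 → Fin 5 → ℝ) := by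
  have hsnoc := xi_init_linearIndependent.finSnoc_of_not_mem_span_over (K := ℚ)
    (x := ![θ/2, 1, c, -c, -1]) ?_
  · simpa only [Matrix.Fin.snoc_vecCons, Matrix.Fin.snoc_vecEmpty] using hsnoc
  refine Irrational.notMem_span_rat (LinearMap.proj 0) ?_
    (by simpa using hθ.div_natCast two_ne_zero)
  rintro _ ⟨i, rfl⟩
  fin_cases i
  exacts [⟨1, by simp⟩, ⟨2⁻¹, by simp⟩, ⟨2⁻¹, by simp⟩, ⟨2⁻¹, by simp⟩, ⟨2⁻¹, by simp⟩]

/-- The six basis vectors `ξ₁, …, ξ₆` of the range of the Chern–Connes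
character `𝐓₂` (with `c = -1` if `0 < θ < 1/2` and `c = 1` if `1/2 < θ < 1`) are
ℤ-linearly independent in ℝ⁵. -/
theorem xi_linearIndependent (θ : ℝ) (hθ : Irrational θ)
    (h0 : 0 < θ) (h1 : θ < 1) (c : ℝ)
    (hc₁ : θ < 1/2 → c = -1) (hc₂ : 1/2 < θ → c = 1) :
    LinearIndependent ℤ
      (![![1, 0, 0, 0, 0],
         ![1/2, 2, 0, 0, 0],
         ![1/2, 0, 2, 0, 0],
         ![1/2, 0, 0, 2, 0],
         ![1/2, 0, 0, 0, 2],
         ![θ/2, 1, c, -c, -1]] : Fin 6 → Fin 5 → ℝ) :=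
  xi_linearIndependent_general θ hθ c
end
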